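/- Suppose v is a cut vertex of a connected graph G separating the remaining vertices into two components V_s and V_t with s ∈ V_s and t ∈ V_t. Then the grounded Laplacian L_v, after ordering vertices as (V_s, V_t), is block diagonal with blocks L_{V_s} and L_{V_t}, and the biharmonic distance satisfies b(s,t) = ‖L_{V_s}⁻¹ e_s − L_{V_t}⁻¹ e_t‖₂² − (1/n)(1ᵀ(L_{V_s}⁻¹ e_s − L_{V_t}⁻¹ e_t))², where L_{V_s}⁻¹ e_s and L_{V_t}⁻¹ e_t are extended by zeros to the complementary component. -/

import Mathlib

/-!
Since `v` separates `Vs` from `Vt`, the Laplacian `L` has no entries between the two sides, so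
`f` solves `L f = e_s - e_t` at every vertex other than `v`; at `v` the equation follows because
both sides have coordinate sum zero. As `G` is connected, the kernel of `L` consists of the
constants, so the pseudoinverse sends `L f` to the centred vector `f - (∑ f / n) 𝟙`. The
pseudoinverse of the symmetric `L` is symmetric, hence `b(s,t) = ‖L† (e_s - e_t)‖²`, which is the
squared norm of that centred vector.
-/

open Matrix BigOperators

/-- `B` is the Moore–Penrose pseudoinverse of `A`. -/
def IsMoorePenrose {n : Type*} [Fintype n] [DecidableEq n]
    (A B : Matrix n n ℝ) : Prop :=
  A * B * A = A ∧ B * A * B = B ∧ (A * B)ᵀ = A * B ∧ (B * A)ᵀ = B * A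

namespace IsMoorePenrose

variable {m : Type*} [Fintype m] [DecidableEq m] {A B C : Matrix m m ℝ}

theorem unique (hB : IsMoorePenrose A B) (hC : IsMoorePenrose A C) : B = C := by
  obtain ⟨hB₁, hB₂, hB₃, hB₄⟩ := hB
  obtain ⟨hC₁, hC₂, hC₃, hC₄⟩ := hC
  have hAB : A * B = A * C :=
    calc A * B = (A * C) * (A * B) := by rw [← Matrix.mul_assoc, hC₁]
    _ = (A * C)ᵀ * (A * B)ᵀ := by rw [hC₃, hB₃]
    _ = (A * B * A * C)ᵀ := by simp only [transpose_mul, Matrix.mul_assoc]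
    _ = A * C := by rw [hB₁, hC₃]
  have hBA : B * A = C * A :=
    calc B * A = (B * A) * (C * A) := by rw [Matrix.mul_assoc, ← Matrix.mul_assoc A, hC₁]
    _ = (B * A)ᵀ * (C * A)ᵀ := by rw [hB₄, hC₄]
    _ = (C * (A * B * A))ᵀ := by simp only [transpose_mul, Matrix.mul_assoc]
    _ = C * A := by rw [hB₁, hC₄]
  calc B = B * A * B := hB₂.symm
  _ = C * A * C := by rw [hBA, Matrix.mul_assoc, hAB, ← Matrix.mul_assoc]
  _ = C := hC₂

theorem transpose (hA : A.IsSymm) (hB : IsMoorePenrose A B) : IsMoorePenrose A Bᵀ := by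
  obtain ⟨hB₁, hB₂, hB₃, hB₄⟩ := hB
  have hABt : A * Bᵀ = B * A := by rw [← hB₄, transpose_mul, hA.eq]
  have hBtA : Bᵀ * A = A * B := by rw [← hB₃, transpose_mul, hA.eq]
  refine ⟨?_, ?_, by rw [hABt, hB₄], by rw [hBtA, hB₃]⟩
  · simpa only [transpose_mul, transpose_transpose, hA.eq, Matrix.mul_assoc]
      using congrArg Matrix.transpose hB₁
  · simpa only [transpose_mul, transpose_transpose, hA.eq, Matrix.mul_assoc]
      using congrArg Matrix.transpose hB₂

theorem isSymm (hA : A.IsSymm) (hB : IsMoorePenrose A B) : B.IsSymm :=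
  (hB.transpose hA).unique hB

end IsMoorePenrose

theorem eq_of_sum_eq_of_forall_ne {V M : Type*} [Fintype V] [DecidableEq V] [AddCommGroup M]
    {u y : V → M} (v : V) (hsum : ∑ w, u w = ∑ w, y w) (h : ∀ w ≠ v, u w = y w) : u = y := by
  funext w
  rcases eq_or_ne w v with rfl | hw
  · have hrest : ∑ x ∈ Finset.univ.erase w, u x = ∑ x ∈ Finset.univ.erase w, y x :=
      Finset.sum_congr rfl fun x hx => h x (Finset.ne_of_mem_erase hx)
    rw [← Finset.add_sum_erase _ _ (Finset.mem_univ w),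
      ← Finset.add_sum_erase _ _ (Finset.mem_univ w), hrest] at hsum
    exact add_right_cancel hsum
  · exact h w hw

theorem sum_sub_sum_div_card_sq {V : Type*} [Fintype V] (g : V → ℝ) :
    ∑ w, (g w - (∑ u, g u) / Fintype.card V) ^ 2
      = ∑ w, g w ^ 2 - 1 / Fintype.card V * (∑ w, g w) ^ 2 := by
  simp only [sub_sq, Finset.sum_add_distrib, Finset.sum_sub_distrib, ← Finset.sum_mul,
    ← Finset.mul_sum, Finset.sum_const, Finset.card_univ, nsmul_eq_mul]
  rcases eq_or_ne (Fintype.card V : ℝ) 0 with hV | hV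
  · simp [hV]
  · field_simp
    ring

section ZeroExtend

variable {V R : Type*} [Fintype V] [DecidableEq V]

def zeroExtend [Zero R] (S : Finset V) (u : S → R) : V → R :=
  fun w => if h : w ∈ S then u ⟨w, h⟩ else 0

theorem mulVec_zeroExtend_apply [NonUnitalNonAssocSemiring R] (A : Matrix V V R) (S : Finset V)
    (u : S → R) (w : V) : (A *ᵥ zeroExtend S u) w = ∑ b : S, A w b * u b := by
  rw [mulVec, dotProduct, ← Finset.sum_subset S.subset_univ, ← Finset.sum_coe_sort]
  · simp [zeroExtend]
  · intro b _ hb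
    simp [zeroExtend, hb]

theorem mulVec_zeroExtend_apply_of_forall_eq_zero [NonUnitalNonAssocSemiring R]
    {A : Matrix V V R} {S : Finset V} (u : S → R) {w : V} (h : ∀ b ∈ S, A w b = 0) :
    (A *ᵥ zeroExtend S u) w = 0 := by
  rw [mulVec_zeroExtend_apply]
  exact Finset.sum_eq_zero fun b _ => by rw [h b b.2, zero_mul]

theorem mulVec_zeroExtend_inv_mulVec_apply [CommRing R] {A : Matrix V V R} {S : Finset V}
    (hA : IsUnit (A.submatrix (Subtype.val : S → V) (Subtype.val : S → V))) (r : S → R) (w : S) :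
    (A *ᵥ zeroExtend S ((A.submatrix (Subtype.val : S → V) Subtype.val)⁻¹ *ᵥ r)) w = r w := by
  rw [mulVec_zeroExtend_apply]
  change (A.submatrix (Subtype.val : S → V) Subtype.val *ᵥ _ *ᵥ r) w = r w
  rw [mulVec_mulVec, mul_nonsing_inv _ ((isUnit_iff_isUnit_det _).mp hA), one_mulVec]

end ZeroExtend

namespace SimpleGraph

variable {V : Type*} [Fintype V] [DecidableEq V] (G : SimpleGraph V) [DecidableRel G.Adj]

theorem lapMatrix_apply_eq_zero_of_not_adj {R : Type*} [AddGroupWithOne R] {a b : V}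
    (hab : a ≠ b) (h : ¬ G.Adj a b) : G.lapMatrix R a b = 0 := by
  simp [lapMatrix, degMatrix, hab, h]

theorem sum_lapMatrix_mulVec {R : Type*} [CommRing R] (y : V → R) :
    ∑ w, (G.lapMatrix R *ᵥ y) w = 0 := by
  rw [← dotProduct_one, dotProduct_comm, dotProduct_mulVec, ← mulVec_transpose,
    (G.isSymm_lapMatrix (R := R)).eq, ← zero_dotProduct y]
  exact congrArg (· ⬝ᵥ y) G.lapMatrix_mulVec_const_eq_zero

variable {G}

theorem eq_zero_of_lapMatrix_mulVec_eq_zero (hG : G.Connected) {y : V → ℝ}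
    (hy : G.lapMatrix ℝ *ᵥ y = 0) (hsum : ∑ w, y w = 0) : y = 0 := by
  obtain ⟨v⟩ := hG.nonempty
  have : Nonempty V := ⟨v⟩
  have hconst : ∀ w, y w = y v := fun w =>
    (lapMatrix_mulVec_eq_zero_iff_forall_reachable G).mp hy w v (hG.preconnected w v)
  have hv : y v = 0 := by
    simp only [hconst, Finset.sum_const, Finset.card_univ, nsmul_eq_mul] at hsum
    exact (mul_eq_zero.mp hsum).resolve_left (Nat.cast_ne_zero.mpr Fintype.card_ne_zero)
  funext w
  rw [hconst, hv, Pi.zero_apply]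

theorem _root_.IsMoorePenrose.mulVec_lapMatrix_mulVec (hG : G.Connected)
    {Ld : Matrix V V ℝ} (hLd : IsMoorePenrose (G.lapMatrix ℝ) Ld) (g : V → ℝ) :
    Ld *ᵥ (G.lapMatrix ℝ *ᵥ g) = fun w => g w - (∑ u, g u) / Fintype.card V := by
  obtain ⟨h₁, -, -, h₄⟩ := hLd
  have : Nonempty V := hG.nonempty
  set L := G.lapMatrix ℝ
  set c := (∑ u, g u) / Fintype.card V
  have hker : L *ᵥ (fun _ => 1) = 0 := G.lapMatrix_mulVec_const_eq_zero
  have hL_centered : L *ᵥ (fun w => g w - c) = L *ᵥ g := by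
    rw [show (fun w => g w - c) = g - c • fun _ => 1 by funext; simp, mulVec_sub, mulVec_smul,
      hker, smul_zero, sub_zero]
  have hsum_centered : ∑ w, (g w - c) = 0 := by
    rw [Finset.sum_sub_distrib, Finset.sum_const, Finset.card_univ, nsmul_eq_mul,
      mul_div_cancel₀ _ (Nat.cast_ne_zero.mpr Fintype.card_ne_zero), sub_self]
  -- `Ld * L` is a symmetric matrix killing the constants, so its range is orthogonal to them.
  have hsum_image : ∑ w, (Ld *ᵥ (L *ᵥ g)) w = 0 := by
    rw [← dotProduct_one, dotProduct_comm, mulVec_mulVec, dotProduct_mulVec,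
      ← mulVec_transpose, h₄, ← mulVec_mulVec, show (1 : V → ℝ) = fun _ => 1 from rfl, hker,
      mulVec_zero, zero_dotProduct]
  symm
  rw [← sub_eq_zero]
  refine eq_zero_of_lapMatrix_mulVec_eq_zero hG ?_ ?_
  · rw [mulVec_sub, hL_centered, mulVec_mulVec, mulVec_mulVec, h₁, sub_self]
  · simp only [Pi.sub_apply, Finset.sum_sub_distrib, hsum_centered, hsum_image, sub_self]

end SimpleGraph

theorem stmt3_general {n : ℕ} (G : SimpleGraph (Fin n)) [DecidableRel G.Adj]
    (hconn : G.Connected)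
    (Ld : Matrix (Fin n) (Fin n) ℝ) (hLd : IsMoorePenrose (G.lapMatrix ℝ) Ld)
    (v s t : Fin n) (Vs Vt : Finset (Fin n))
    (hs : s ∈ Vs) (ht : t ∈ Vt) (hdisj : Disjoint Vs Vt)
    (hcover : ∀ u : Fin n, u ≠ v → u ∈ Vs ∨ u ∈ Vt)
    -- removing `v` disconnects `Vs` from `Vt`
    (hsep : ∀ a ∈ Vs, ∀ b ∈ Vt, ¬ G.Adj a b)
    -- `Vs` and `Vt` are (unions of) connected components of `G - v`,
    -- in particular every vertex of them is connected within its own side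
    (LVs : Matrix Vs Vs ℝ)
    (hLVs : LVs = (G.lapMatrix ℝ).submatrix (Subtype.val : Vs → Fin n) Subtype.val)
    (LVt : Matrix Vt Vt ℝ)
    (hLVt : LVt = (G.lapMatrix ℝ).submatrix (Subtype.val : Vt → Fin n) Subtype.val)
    (hinvs : IsUnit LVs) (hinvt : IsUnit LVt)
    (es : Vs → ℝ) (hes : es = fun (u : Vs) => if (u : Fin n) = s then 1 else 0)
    (et : Vt → ℝ) (het : et = fun (u : Vt) => if (u : Fin n) = t then 1 else 0)
    -- `f` is `L_{Vs}⁻¹ e_s − L_{Vt}⁻¹ e_t`, both extended by zeros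
    (f : Fin n → ℝ)
    (hf : f = fun w =>
      (if h : w ∈ Vs then LVs⁻¹.mulVec es ⟨w, h⟩ else 0)
        - (if h : w ∈ Vt then LVt⁻¹.mulVec et ⟨w, h⟩ else 0))
    (x : Fin n → ℝ)
    (hx : x = fun i => (if i = s then (1 : ℝ) else 0) - (if i = t then 1 else 0)) :
    -- the grounded Laplacian is block diagonal w.r.t. (Vs, Vt)
    (∀ a ∈ Vs, ∀ b ∈ Vt, G.lapMatrix ℝ a b = 0) ∧
    -- and the biharmonic distance formula
      x ⬝ᵥ (Ld * Ld).mulVec x =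
        ∑ w, (f w) ^ 2 - (1 / (n : ℝ)) * (∑ w, f w) ^ 2 := by
  subst hLVs hLVt
  have hblock_st : ∀ a ∈ Vs, ∀ b ∈ Vt, G.lapMatrix ℝ a b = 0 := fun a ha b hb =>
    G.lapMatrix_apply_eq_zero_of_not_adj (fun hab => Finset.disjoint_left.mp hdisj ha (hab ▸ hb))
      (hsep a ha b hb)
  have hblock_ts : ∀ a ∈ Vt, ∀ b ∈ Vs, G.lapMatrix ℝ a b = 0 := fun a ha b hb => by
    rw [← (G.isSymm_lapMatrix (R := ℝ)).apply a b]
    exact hblock_st b hb a ha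
  refine ⟨hblock_st, ?_⟩
  have hf' : f = zeroExtend Vs (((G.lapMatrix ℝ).submatrix Subtype.val Subtype.val)⁻¹ *ᵥ es)
      - zeroExtend Vt (((G.lapMatrix ℝ).submatrix Subtype.val Subtype.val)⁻¹ *ᵥ et) := hf
  have hLf : G.lapMatrix ℝ *ᵥ f = x := by
    refine eq_of_sum_eq_of_forall_ne v ?_ fun w hw => ?_
    · simp [G.sum_lapMatrix_mulVec, hx, Finset.sum_sub_distrib]
    rw [hf', mulVec_sub, Pi.sub_apply]
    rcases hcover w hw with hws | hwt
    · rw [mulVec_zeroExtend_inv_mulVec_apply hinvs es ⟨w, hws⟩,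
        mulVec_zeroExtend_apply_of_forall_eq_zero _ (hblock_st w hws)]
      have hwt : w ≠ t := fun h => Finset.disjoint_left.mp hdisj hws (h ▸ ht)
      simp [hes, hx, hwt]
    · rw [mulVec_zeroExtend_inv_mulVec_apply hinvt et ⟨w, hwt⟩,
        mulVec_zeroExtend_apply_of_forall_eq_zero _ (hblock_ts w hwt)]
      have hws : w ≠ s := fun h => Finset.disjoint_left.mp hdisj (h ▸ hs) hwt
      simp [het, hx, hws]
  have hLd_symm : Ldᵀ = Ld := (hLd.isSymm (G.isSymm_lapMatrix (R := ℝ))).eq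
  rw [← mulVec_mulVec, dotProduct_mulVec, ← mulVec_transpose, hLd_symm, ← hLf,
    hLd.mulVec_lapMatrix_mulVec hconn]
  simpa only [dotProduct, ← sq, Fintype.card_fin] using sum_sub_sum_div_card_sq f

theorem stmt3 {n : ℕ} (G : SimpleGraph (Fin n)) [DecidableRel G.Adj]
    (hconn : G.Connected)
    (Ld : Matrix (Fin n) (Fin n) ℝ) (hLd : IsMoorePenrose (G.lapMatrix ℝ) Ld)
    (v s t : Fin n) (Vs Vt : Finset (Fin n))
    (hs : s ∈ Vs) (ht : t ∈ Vt) (hdisj : Disjoint Vs Vt)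
    (hv : v ∉ Vs) (hv' : v ∉ Vt)
    (hcover : ∀ u : Fin n, u ≠ v → u ∈ Vs ∨ u ∈ Vt)
    -- removing `v` disconnects `Vs` from `Vt`
    (hsep : ∀ a ∈ Vs, ∀ b ∈ Vt, ¬ G.Adj a b)
    -- `Vs` and `Vt` are (unions of) connected components of `G - v`,
    -- in particular every vertex of them is connected within its own side
    (LVs : Matrix Vs Vs ℝ)
    (hLVs : LVs = (G.lapMatrix ℝ).submatrix (Subtype.val : Vs → Fin n) Subtype.val)
    (LVt : Matrix Vt Vt ℝ)
    (hLVt : LVt = (G.lapMatrix ℝ).submatrix (Subtype.val : Vt → Fin n) Subtype.val)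
    (hinvs : IsUnit LVs) (hinvt : IsUnit LVt)
    (es : Vs → ℝ) (hes : es = fun (u : Vs) => if (u : Fin n) = s then 1 else 0)
    (et : Vt → ℝ) (het : et = fun (u : Vt) => if (u : Fin n) = t then 1 else 0)
    -- `f` is `L_{Vs}⁻¹ e_s − L_{Vt}⁻¹ e_t`, both extended by zeros
    (f : Fin n → ℝ)
    (hf : f = fun w =>
      (if h : w ∈ Vs then LVs⁻¹.mulVec es ⟨w, h⟩ else 0)
        - (if h : w ∈ Vt then LVt⁻¹.mulVec et ⟨w, h⟩ else 0))
    (x : Fin n → ℝ)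
    (hx : x = fun i => (if i = s then (1 : ℝ) else 0) - (if i = t then 1 else 0)) :
    -- the grounded Laplacian is block diagonal w.r.t. (Vs, Vt)
    (∀ a ∈ Vs, ∀ b ∈ Vt, G.lapMatrix ℝ a b = 0) ∧
    -- and the biharmonic distance formula
      x ⬝ᵥ (Ld * Ld).mulVec x =
        ∑ w, (f w) ^ 2 - (1 / (n : ℝ)) * (∑ w, f w) ^ 2 :=
  stmt3_general G hconn Ld hLd v s t Vs Vt hs ht hdisj hcover hsep LVs hLVs LVt hLVt hinvs hinvt es
    hes et het f hf x hx
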